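/- arXiv:1208.0495 — 6 statements merged into one kernel-verified Lean document; each statement's English description precedes it below -/
import Mathlib

section
/- Let q be a power of an odd prime with q ≡ 1 (mod 3), let φ be the quadratic character of F_q and χ₃ a character of order 3. Let a_q := -Σ_{x∈F_q} φ((x-1)(x²+1/3)). Then -φ(-2)·a_q/q = 2·Re(C(χ₃,φ)), where C(A,B) = B(-1)·J(A,B̄)/q is Greene's binomial coefficient. -/
/-- The Jacobi sum of two multiplicative characters. -/
noncomputable def jacSum {F : Type*} [Field F] [Fintype F] (A B : MulChar F ℂ) : ℂ :=
  ∑ x : F, A x * B (1 - x)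

/-- Greene's binomial coefficient `C(A,B) = B(-1)/q · J(A, B⁻¹)`. -/
noncomputable def greeneBinom {F : Type*} [Field F] [Fintype F] (A B : MulChar F ℂ) : ℂ :=
  B (-1) / (Fintype.card F : ℂ) * jacSum A B⁻¹

/-!
Counting cube roots with `χ₃` gives `#{z | z³ = x} = 1 + χ₃ x + χ₃⁻¹ x`, hence
`J(χ₃, φ) + J(χ₃⁻¹, φ) = ∑ z, φ (1 - z³)` because `∑ x, φ (1 - x) = 0`. The substitution
`z = (3t - 1)/2` turns `1 - z³` into `-(27/8)·(t - 1)(t² + 1/3)`, and `-27/8` is twice the square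
`(3(2ω + 1)/4)²` for a primitive cube root of unity `ω`, so this sum is `-φ 2 · a_q`. Finally `φ`
is real, so complex conjugation maps `C(χ₃, φ)` to `C(χ₃⁻¹, φ)`, and `2 Re C = C + conj C`.
-/

open Finset

lemma FiniteField.exists_isPrimitiveRoot_of_dvd_card_sub_one {F : Type*} [Field F] [Fintype F]
    {n : ℕ} (hn : n ∣ Fintype.card F - 1) : ∃ ζ : F, IsPrimitiveRoot ζ n := by
  obtain ⟨g, hg⟩ := IsCyclic.exists_ofOrder_eq_natCard (α := Fˣ)
  have hg' : IsPrimitiveRoot (g : F) (Fintype.card F - 1) := by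
    rw [IsPrimitiveRoot.coe_units_iff, ← Nat.card_eq_fintype_card, ← Nat.card_units, ← hg]
    exact IsPrimitiveRoot.orderOf g
  have hq : Fintype.card F - 1 ≠ 0 := by
    have := Fintype.one_lt_card (α := F)
    omega
  have hn0 : n ≠ 0 := by
    rintro rfl
    exact hq (Nat.eq_zero_of_zero_dvd hn)
  have hζ := hg'.pow_of_dvd (Nat.div_ne_zero_iff_of_dvd hn |>.mpr ⟨hq, hn0⟩) (Nat.div_dvd_of_dvd hn)
  exact ⟨_, Nat.div_div_self hn hq ▸ hζ⟩

lemma IsPrimitiveRoot.two_mul_add_one_sq {F : Type*} [Field F] {ω : F}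
    (hω : IsPrimitiveRoot ω 3) : (2 * ω + 1) ^ 2 = -3 := by
  have h := hω.geom_sum_eq_zero (by norm_num)
  simp only [sum_range_succ, range_zero, sum_empty] at h
  linear_combination 4 * h

namespace MulChar

section Field
variable {F R : Type*} [Field F] [CommRing R]

lemma IsQuadratic.apply_mul_sq {ψ : MulChar F R} (hψ : ψ.IsQuadratic) (a : F) {b : F}
    (hb : b ≠ 0) : ψ (a * b ^ 2) = ψ a := by
  rw [map_mul, map_pow, ← pow_apply' ψ two_ne_zero, hψ.sq_eq_one, one_apply (Ne.isUnit hb),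
    mul_one]

end Field

variable {F R : Type*} [Field F] [Fintype F] [CommRing R]

lemma exists_pow_orderOf_eq_of_apply_eq_one (χ : MulChar F R) {a : F} (ha : a ≠ 0)
    (hχa : χ a = 1) : ∃ b : F, b ^ orderOf χ = a := by
  obtain ⟨g, hg⟩ := IsCyclic.exists_generator (α := Fˣ)
  obtain ⟨k, hk⟩ := mem_powers_iff_mem_zpowers.mpr (hg (Units.mk0 a ha))
  have hgk : (g : F) ^ k = a := by simpa using congrArg Units.val hk
  have hχk : χ ^ k = 1 := by
    rw [eq_iff hg, pow_apply_coe, one_apply_coe, ← map_pow, hgk, hχa]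
  obtain ⟨m, rfl⟩ := orderOf_dvd_of_pow_eq_one hχk
  exact ⟨(g : F) ^ m, by rw [← pow_mul, mul_comm, hgk]⟩

lemma apply_pow_orderOf (χ : MulChar F R) {a : F} (ha : a ≠ 0) : χ a ^ orderOf χ = 1 := by
  rw [← pow_apply' χ χ.orderOf_pos.ne', pow_orderOf_eq_one, one_apply (Ne.isUnit ha)]

/- The summands are powers of the value `χ a`, not values of the characters `χ ^ k`: at `a = 0`
only the former give the single root `z = 0`. -/
lemma card_pow_orderOf_eq [IsDomain R] [DecidableEq F] (χ : MulChar F R) (a : F) :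
    (#{z | z ^ orderOf χ = a} : R) = ∑ k ∈ range (orderOf χ), χ a ^ k := by
  have hn : 0 < orderOf χ := χ.orderOf_pos
  rcases eq_or_ne a 0 with rfl | ha
  · have hzero : ({z | z ^ orderOf χ = 0} : Finset F) = {0} := by
      ext z
      simp [pow_eq_zero_iff hn.ne']
    rw [hzero, χ.map_zero]
    simp [zero_pow_eq, hn]
  obtain ⟨ζ, hζ⟩ :=
    FiniteField.exists_isPrimitiveRoot_of_dvd_card_sub_one χ.orderOf_dvd_card_sub_one
  have hcard : #{z | z ^ orderOf χ = a} = Multiset.card (Polynomial.nthRoots (orderOf χ) a) := by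
    rw [← Multiset.toFinset_card_of_nodup (hζ.nthRoots_nodup ha), ← Polynomial.nthRootsFinset_def]
    congr 1
    ext z
    simp [Polynomial.mem_nthRootsFinset hn]
  rw [hcard, hζ.card_nthRoots]
  split_ifs with hroot
  · obtain ⟨b, rfl⟩ := hroot
    have hb : b ≠ 0 := by rintro rfl; exact ha (zero_pow hn.ne')
    simp [χ.apply_pow_orderOf hb]
  · have hχa : χ a ≠ 1 := fun h ↦ hroot (χ.exists_pow_orderOf_eq_of_apply_eq_one ha h)
    have hgeom := geom_sum_mul (χ a) (orderOf χ)
    rw [χ.apply_pow_orderOf ha, sub_self] at hgeom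
    exact_mod_cast ((mul_eq_zero.mp hgeom).resolve_right (sub_ne_zero.mpr hχa)).symm

lemma sum_comp_pow_orderOf [IsDomain R] (χ : MulChar F R) (f : F → R) :
    ∑ z, f (z ^ orderOf χ) = ∑ x, (∑ k ∈ range (orderOf χ), χ x ^ k) * f x := by
  classical
  rw [← sum_fiberwise univ (· ^ orderOf χ)]
  refine sum_congr rfl fun x _ ↦ ?_
  rw [← card_pow_orderOf_eq, sum_congr rfl fun z hz ↦ by rw [(mem_filter.mp hz).2], sum_const,
    nsmul_eq_mul]

lemma sum_apply_one_sub_cube (ψ : MulChar F R) (h2 : (2 : F) ≠ 0) (h3 : (3 : F) ≠ 0) :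
    ∑ z : F, ψ (1 - z ^ 3) = ψ (-27 / 8) * ∑ t : F, ψ ((t - 1) * (t ^ 2 + 3⁻¹)) := by
  let e : F ≃ F :=
    { toFun t := (3 * t - 1) / 2
      invFun z := (2 * z + 1) / 3
      left_inv t := by field_simp; ring
      right_inv z := by field_simp; ring }
  have h8 : (8 : F) ≠ 0 := by rw [show (8 : F) = 2 ^ 3 by norm_num]; exact pow_ne_zero 3 h2
  rw [mul_sum, ← e.sum_comp]
  refine sum_congr rfl fun t _ ↦ ?_
  rw [← map_mul]
  congr 1
  simp only [e, Equiv.coe_fn_mk]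
  field_simp
  ring

lemma IsQuadratic.sum_apply_one_sub_cube {ψ : MulChar F R} (hψ : ψ.IsQuadratic)
    (h2 : (2 : F) ≠ 0) {ω : F} (hω : IsPrimitiveRoot ω 3) :
    ∑ z : F, ψ (1 - z ^ 3) = ψ 2 * ∑ t : F, ψ ((t - 1) * (t ^ 2 + 3⁻¹)) := by
  have h3 : (3 : F) ≠ 0 := hω.neZero'.out
  have h4 : (4 : F) ≠ 0 := by rw [show (4 : F) = 2 ^ 2 by norm_num]; exact pow_ne_zero 2 h2
  have h8 : (8 : F) ≠ 0 := by rw [show (8 : F) = 2 ^ 3 by norm_num]; exact pow_ne_zero 3 h2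
  have hω2 := hω.two_mul_add_one_sq
  have hu : 3 * (2 * ω + 1) / 4 ≠ 0 := by
    refine div_ne_zero (mul_ne_zero h3 fun h ↦ h3 ?_) h4
    simpa [h, eq_comm] using hω2
  have hsq : (-27 / 8 : F) = 2 * (3 * (2 * ω + 1) / 4) ^ 2 := by
    field_simp
    linear_combination -144 * hω2
  rw [ψ.sum_apply_one_sub_cube h2 h3, hsq, hψ.apply_mul_sq 2 hu]

end MulChar

lemma jacSum_add_jacSum_inv_eq_sum_one_sub_cube {F : Type*} [Field F] [Fintype F]
    {χ ψ : MulChar F ℂ} (hχ : orderOf χ = 3) (hψ : ψ ≠ 1) :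
    jacSum χ ψ + jacSum χ⁻¹ ψ = ∑ z : F, ψ (1 - z ^ 3) := by
  have hinv : χ⁻¹ = χ ^ 2 := inv_eq_of_mul_eq_one_right <| by
    rw [← pow_succ', show 2 + 1 = orderOf χ from hχ.symm, pow_orderOf_eq_one]
  have hψsum : ∑ x : F, ψ (1 - x) = 0 := by
    rw [← MulChar.sum_eq_zero_of_ne_one hψ]
    exact Fintype.sum_equiv (Equiv.subLeft 1) _ _ fun _ ↦ rfl
  have hterm (x : F) : (∑ k ∈ range 3, χ x ^ k) * ψ (1 - x) =
      ψ (1 - x) + (χ x * ψ (1 - x) + χ⁻¹ x * ψ (1 - x)) := by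
    rw [hinv, MulChar.pow_apply' χ two_ne_zero]
    simp only [sum_range_succ, range_zero, sum_empty]
    ring
  have h := χ.sum_comp_pow_orderOf fun x ↦ ψ (1 - x)
  rw [hχ] at h
  rw [h, sum_congr rfl fun x _ ↦ hterm x, sum_add_distrib, hψsum, zero_add, jacSum, jacSum,
    sum_add_distrib]

lemma star_jacSum {F : Type*} [Field F] [Fintype F] (A B : MulChar F ℂ) :
    star (jacSum A B) = jacSum A⁻¹ B⁻¹ := by
  simp [jacSum, star_sum, MulChar.star_apply']

lemma star_greeneBinom {F : Type*} [Field F] [Fintype F] (A B : MulChar F ℂ) :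
    star (greeneBinom A B) = greeneBinom A⁻¹ B⁻¹ := by
  simp [greeneBinom, star_jacSum, MulChar.star_apply']

theorem stmt5_general (F : Type*) [Field F] [Fintype F] [DecidableEq F]
    (hodd : Odd (Fintype.card F))
    (χ₃ : MulChar F ℂ) (hχ₃ : orderOf χ₃ = 3) :
    let φ : MulChar F ℂ := (quadraticChar F).ringHomComp (Int.castRingHom ℂ);
    let aq : ℂ := -∑ x : F, φ ((x - 1) * (x ^ 2 + (3 : F)⁻¹));
    -φ (-2) * aq / (Fintype.card F : ℂ) = 2 * ((greeneBinom χ₃ φ).re : ℂ) := by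
  intro φ aq
  have hF : ringChar F ≠ 2 := by
    rw [Ne, FiniteField.even_card_iff_char_two, ← Nat.even_iff, Nat.not_even_iff_odd]
    exact hodd
  have hφ : φ.IsQuadratic := (quadraticChar_isQuadratic F).comp _
  have hφ1 : φ ≠ 1 :=
    (MulChar.ringHomComp_ne_one_iff Int.cast_injective).mpr (quadraticChar_ne_one hF)
  obtain ⟨ω, hω⟩ := FiniteField.exists_isPrimitiveRoot_of_dvd_card_sub_one
    (hχ₃ ▸ χ₃.orderOf_dvd_card_sub_one)
  have hJ : jacSum χ₃ φ + jacSum χ₃⁻¹ φ = φ 2 * -aq := by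
    rw [jacSum_add_jacSum_inv_eq_sum_one_sub_cube hχ₃ hφ1,
      hφ.sum_apply_one_sub_cube (Ring.two_ne_zero hF) hω, neg_neg]
  have hre : 2 * ((greeneBinom χ₃ φ).re : ℂ) = greeneBinom χ₃ φ + star (greeneBinom χ₃ φ) := by
    rw [Complex.star_def, Complex.add_conj]
    push_cast
    rfl
  have hφ2 : φ (-2) = φ (-1) * φ 2 := by rw [← map_mul]; norm_num
  rw [hre, star_greeneBinom, greeneBinom, greeneBinom, inv_inv, hφ.inv, ← mul_add, hJ, hφ2]
  ring

/-- McCarthy's result: `-φ(-2)·a_q/q = 2·Re C(χ₃,φ)` where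
`a_q = -Σ_x φ((x-1)(x²+1/3))`. -/
theorem stmt5 (F : Type*) [Field F] [Fintype F] [DecidableEq F]
    (hodd : Odd (Fintype.card F)) (hq : Fintype.card F % 3 = 1)
    (χ₃ : MulChar F ℂ) (hχ₃ : orderOf χ₃ = 3) :
    let φ : MulChar F ℂ := (quadraticChar F).ringHomComp (Int.castRingHom ℂ);
    let aq : ℂ := -∑ x : F, φ ((x - 1) * (x ^ 2 + (3 : F)⁻¹));
    -φ (-2) * aq / (Fintype.card F : ℂ) = 2 * ((greeneBinom χ₃ φ).re : ℂ) :=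
  stmt5_general F hodd χ₃ hχ₃
end

section
/- Let q be a power of an odd prime with q ≡ 1 (mod 3) and q ≡ 1 (mod l) for an integer l ≥ 2 with l ≠ 3. Let S be a character of order l and χ₃ a character of order 3 of F_q. Then the number of affine points (x,y) ∈ F_q² on y^l = (x-1)(x²+1/3) equals q + q·Σ_{i=1}^{l-1} S^i(27/8)·( C(χ₃,S^i) + C(χ₃²,S^i) ), where C(A,B) = B(-1)·J(A,B̄)/q is Greene's binomial coefficient. -/
open Finset

lemma natCast_ne_zero_of_dvd_card_sub_one {F : Type*} [Field F] [Fintype F] {n : ℕ}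
    (hn : n ∣ Fintype.card F - 1) : (n : F) ≠ 0 := by
  intro h
  obtain ⟨k, hk⟩ := hn
  have hq1 : ((Fintype.card F - 1 : ℕ) : F) = 0 := by rw [hk, Nat.cast_mul, h, zero_mul]
  rw [Nat.cast_sub Fintype.card_pos, FiniteField.cast_card_eq_zero, Nat.cast_one,
    zero_sub, neg_eq_zero] at hq1
  exact one_ne_zero hq1

namespace MulChar

lemma orderOf_eq_orderOf_apply_of_generator {M R : Type*} [CommMonoid M] [CommMonoidWithZero R]
    {g : Mˣ} (hg : ∀ x, x ∈ Subgroup.zpowers g) (χ : MulChar M R) :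
    orderOf χ = orderOf (χ g) := by
  refine orderOf_eq_orderOf_iff.mpr fun k ↦ ?_
  rw [eq_iff hg, pow_apply_coe, one_apply_coe]

variable {F R : Type*} [Field F] [Fintype F]

lemma apply_eq_one_iff_exists_pow_eq [CommMonoidWithZero R] (χ : MulChar F R) {a : F}
    (ha : a ≠ 0) : χ a = 1 ↔ ∃ b : F, b ^ orderOf χ = a := by
  classical
  constructor
  · intro hχa
    obtain ⟨g, hg⟩ := IsCyclic.exists_generator (α := Fˣ)
    obtain ⟨m, hm⟩ : ∃ m : ℕ, g ^ m = ha.isUnit.unit :=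
      (Submonoid.mem_powers_iff _ _).mp (mem_powers_iff_mem_zpowers.mpr (hg _))
    have hdvd : orderOf χ ∣ m := by
      rw [orderOf_eq_orderOf_apply_of_generator hg, orderOf_dvd_iff_pow_eq_one, ← map_pow,
        ← Units.val_pow_eq_pow_val, hm, IsUnit.unit_spec, hχa]
    obtain ⟨k, rfl⟩ := hdvd
    refine ⟨(g ^ k : Fˣ), ?_⟩
    rw [← Units.val_pow_eq_pow_val, ← pow_mul, mul_comm, hm, IsUnit.unit_spec]
  · rintro ⟨b, rfl⟩
    have hb : b ≠ 0 := by rintro rfl; exact ha (zero_pow χ.orderOf_pos.ne')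
    rw [map_pow, ← pow_apply' χ χ.orderOf_pos.ne', pow_orderOf_eq_one, one_apply hb.isUnit]

variable [DecidableEq F] [Field R]

lemma natCast_card_filter_pow_eq_sum_range (χ : MulChar F R) {a : F}
    (ha : a ≠ 0) :
    (#{y | y ^ orderOf χ = a} : R) = ∑ j ∈ range (orderOf χ), (χ ^ j) a := by
  classical
  obtain ⟨ζ, hζ⟩ :=
    FiniteField.exists_isPrimitiveRoot_of_dvd_card_sub_one χ.orderOf_dvd_card_sub_one
  have hroots : #{y | y ^ orderOf χ = a} = Multiset.card (Polynomial.nthRoots (orderOf χ) a) := by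
    rw [← Multiset.toFinset_card_of_nodup (hζ.nthRoots_nodup ha)]
    congr 1
    ext y
    simp [Polynomial.mem_nthRoots χ.orderOf_pos]
  have hpow : ∀ j, (χ ^ j) a = χ a ^ j := fun j ↦ χ.pow_apply_coe j ha.isUnit.unit
  rw [hroots, hζ.card_nthRoots]
  simp_rw [hpow, ← χ.apply_eq_one_iff_exists_pow_eq ha]
  split_ifs with h1
  · simp [h1]
  · have hn : χ a ^ orderOf χ = 1 := by
      rw [← hpow, pow_orderOf_eq_one, one_apply ha.isUnit]
    rw [geom_sum_eq h1, hn, sub_self, zero_div, Nat.cast_zero]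

lemma natCast_card_filter_pow_eq (χ : MulChar F R) (a : F) :
    (#{y | y ^ orderOf χ = a} : R) = 1 + ∑ j ∈ Icc 1 (orderOf χ - 1), (χ ^ j) a := by
  have hn := χ.orderOf_pos
  rcases eq_or_ne a 0 with rfl | ha
  · have hzero : ({y | y ^ orderOf χ = 0} : Finset F) = {0} := by
      ext y
      simp [pow_eq_zero_iff hn.ne']
    rw [hzero, card_singleton, Nat.cast_one, sum_eq_zero fun j _ ↦ map_nonunit _ not_isUnit_zero,
      add_zero]
  · have hrange : range (orderOf χ) = insert 0 (Icc 1 (orderOf χ - 1)) := by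
      ext j
      simp only [mem_range, mem_insert, mem_Icc]
      omega
    rw [natCast_card_filter_pow_eq_sum_range χ ha, hrange, sum_insert (by simp), pow_zero,
      one_apply ha.isUnit]

end MulChar

section CubicCharacterSums

variable {F : Type*} [Field F] [Fintype F]

lemma sum_apply_one_sub (T : MulChar F ℂ) (hT : T ≠ 1) : ∑ t, T (1 - t) = 0 := by
  rw [← T.sum_eq_zero_of_ne_one hT]
  exact Fintype.sum_equiv (Equiv.subLeft 1) _ _ fun _ ↦ rfl

lemma sum_apply_one_sub_cube (χ₃ T : MulChar F ℂ) (hχ₃ : orderOf χ₃ = 3) (hT : T ≠ 1) :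
    ∑ v, T (1 - v ^ 3) = jacSum χ₃ T + jacSum (χ₃ ^ 2) T := by
  classical
  have hcount : ∀ t : F, (#{v | v ^ 3 = t} : ℂ) = 1 + χ₃ t + (χ₃ ^ 2) t := by
    intro t
    have h := χ₃.natCast_card_filter_pow_eq (R := ℂ) t
    rw [hχ₃, show Icc 1 (3 - 1) = {1, 2} by decide, sum_pair (by decide), pow_one] at h
    rw [h, add_assoc]
  calc ∑ v, T (1 - v ^ 3)
      = ∑ t, ∑ v with v ^ 3 = t, T (1 - v ^ 3) := (sum_fiberwise univ (· ^ 3) _).symm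
    _ = ∑ t, (#{v | v ^ 3 = t} : ℂ) * T (1 - t) := by
      refine sum_congr rfl fun t _ ↦ ?_
      rw [← nsmul_eq_mul, ← sum_const]
      exact sum_congr rfl fun v hv ↦ by rw [(mem_filter.mp hv).2]
    _ = ∑ t, T (1 - t) + jacSum χ₃ T + jacSum (χ₃ ^ 2) T := by
      simp only [hcount, add_mul, one_mul, sum_add_distrib, jacSum]
    _ = jacSum χ₃ T + jacSum (χ₃ ^ 2) T := by rw [sum_apply_one_sub T hT, zero_add]

lemma sum_apply_cubic {R : Type*} [CommRing R] (h2 : (2 : F) ≠ 0) (h3 : (3 : F) ≠ 0)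
    (T : MulChar F R) :
    ∑ x, T ((x - 1) * (x ^ 2 + (3 : F)⁻¹)) = T (8 / 27) * T (-1) * ∑ v, T (1 - v ^ 3) := by
  have hbij : Function.Bijective fun v : F ↦ (2 * v + 1) / 3 := by
    refine Function.bijective_iff_has_inverse.mpr
      ⟨fun x ↦ (3 * x - 1) / 2, fun v ↦ ?_, fun x ↦ ?_⟩
    · field_simp; ring
    · field_simp; ring
  rw [← hbij.sum_comp, mul_sum]
  refine sum_congr rfl fun v _ ↦ ?_
  have harg : ((2 * v + 1) / 3 - 1) * (((2 * v + 1) / 3) ^ 2 + (3 : F)⁻¹) =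
      8 / 27 * (-1) * (1 - v ^ 3) := by
    have h27 : (27 : F) ≠ 0 := by
      rw [show (27 : F) = 3 ^ 3 by norm_num]
      exact pow_ne_zero 3 h3
    field_simp
    ring
  rw [harg, map_mul, map_mul]

lemma card_mul_greeneBinom (A B : MulChar F ℂ) :
    (Fintype.card F : ℂ) * greeneBinom A B = B (-1) * jacSum A B⁻¹ := by
  rw [greeneBinom, ← mul_assoc, mul_div_cancel₀ _ (Nat.cast_ne_zero.mpr Fintype.card_ne_zero)]

lemma sum_inv_apply_cubic_eq_card_mul_greeneBinom (h2 : (2 : F) ≠ 0) (h3 : (3 : F) ≠ 0)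
    (χ₃ T : MulChar F ℂ) (hχ₃ : orderOf χ₃ = 3) (hT : T ≠ 1) :
    ∑ x, T⁻¹ ((x - 1) * (x ^ 2 + (3 : F)⁻¹)) =
      Fintype.card F * (T (27 / 8) * (greeneBinom χ₃ T + greeneBinom (χ₃ ^ 2) T)) := by
  rw [sum_apply_cubic h2 h3, sum_apply_one_sub_cube χ₃ T⁻¹ hχ₃ (inv_ne_one.mpr hT),
    mul_left_comm, mul_add (Fintype.card F : ℂ), card_mul_greeneBinom, card_mul_greeneBinom,
    MulChar.inv_apply', MulChar.inv_apply', inv_div, inv_neg, inv_one]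
  ring

end CubicCharacterSums

theorem stmt9_general (F : Type*) [Field F] [Fintype F] [DecidableEq F]
    (hodd : Odd (Fintype.card F))
    (l : ℕ)
    (S : MulChar F ℂ) (hS : orderOf S = l)
    (χ₃ : MulChar F ℂ) (hχ₃ : orderOf χ₃ = 3) :
    ((Finset.univ.filter
        (fun p : F × F => p.2 ^ l = (p.1 - 1) * (p.1 ^ 2 + (3 : F)⁻¹))).card : ℂ) =
      (Fintype.card F : ℂ) + (Fintype.card F : ℂ) *
        ∑ i ∈ Finset.Icc 1 (l - 1),
          (S ^ i) ((27 : F) / 8) *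
            (greeneBinom χ₃ (S ^ i) + greeneBinom (χ₃ ^ 2) (S ^ i)) := by
  have h2 : (2 : F) ≠ 0 := by
    exact_mod_cast natCast_ne_zero_of_dvd_card_sub_one (Nat.odd_iff.mp hodd ▸ Nat.dvd_sub_mod _)
  have h3 : (3 : F) ≠ 0 := by
    exact_mod_cast natCast_ne_zero_of_dvd_card_sub_one (hχ₃ ▸ χ₃.orderOf_dvd_card_sub_one)
  have hcount : ∀ a : F,
      (#{y | y ^ l = a} : ℂ) = 1 + ∑ j ∈ Icc 1 (l - 1), (S ^ j)⁻¹ a := by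
    simpa only [orderOf_inv, hS, inv_pow] using S⁻¹.natCast_card_filter_pow_eq (R := ℂ)
  calc (#{p : F × F | p.2 ^ l = (p.1 - 1) * (p.1 ^ 2 + (3 : F)⁻¹)} : ℂ)
      = ∑ x, (#{y | y ^ l = (x - 1) * (x ^ 2 + (3 : F)⁻¹)} : ℂ) := by
        rw [← Nat.cast_sum, card_filter, Fintype.sum_prod_type]
        exact congrArg _ (sum_congr rfl fun x _ ↦ (card_filter _ _).symm)
    _ = Fintype.card F +
          ∑ j ∈ Icc 1 (l - 1), ∑ x, (S ^ j)⁻¹ ((x - 1) * (x ^ 2 + (3 : F)⁻¹)) := by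
        simp only [hcount, sum_add_distrib, sum_const, card_univ, nsmul_eq_mul, mul_one]
        rw [sum_comm]
    _ = _ := by
        rw [mul_sum]
        refine congrArg _ (sum_congr rfl fun j hj ↦ ?_)
        obtain ⟨hj1, hjl⟩ := mem_Icc.mp hj
        exact sum_inv_apply_cubic_eq_card_mul_greeneBinom h2 h3 χ₃ _ hχ₃
          (pow_ne_one_of_lt_orderOf (by omega) (by omega))

/-- If `q ≡ 1 (mod 3)` and `q ≡ 1 (mod l)`, `l ≠ 3`, then the number of affine points on
`y^l = (x-1)(x²+1/3)` is `q + q·Σ_{i=1}^{l-1} S^i(27/8)(C(χ₃,S^i)+C(χ₃²,S^i))`. -/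
theorem stmt9 (F : Type*) [Field F] [Fintype F] [DecidableEq F]
    (hodd : Odd (Fintype.card F))
    (l : ℕ) (hl : 2 ≤ l) (hl3 : l ≠ 3)
    (hq3 : Fintype.card F % 3 = 1) (hql : Fintype.card F % l = 1)
    (S : MulChar F ℂ) (hS : orderOf S = l)
    (χ₃ : MulChar F ℂ) (hχ₃ : orderOf χ₃ = 3) :
    ((Finset.univ.filter
        (fun p : F × F => p.2 ^ l = (p.1 - 1) * (p.1 ^ 2 + (3 : F)⁻¹))).card : ℂ) =
      (Fintype.card F : ℂ) + (Fintype.card F : ℂ) *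
        ∑ i ∈ Finset.Icc 1 (l - 1),
          (S ^ i) ((27 : F) / 8) *
            (greeneBinom χ₃ (S ^ i) + greeneBinom (χ₃ ^ 2) (S ^ i)) :=
  stmt9_general F hodd l S hS χ₃ hχ₃
end

section
/- Let q be a power of an odd prime with q ≡ 2 (mod 3), and let l ≥ 2 with l ≠ 3 and q ≡ 1 (mod l). Then the number of affine points (x,y) ∈ F_q² on y^l = (x-1)(x²+1/3) equals q. -/
/-! Completing the cube gives `(x - 1)(x² + 1/3) = (x - 1/3)³ - (2/3)³`. Since `3 ∤ q - 1`, cubing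
is a bijection of `F_q`, hence so is `x ↦ (x - 1)(x² + 1/3)`: every `y` lies on exactly one point
of the curve, whatever `l` is. -/

open Function

theorem Finset.card_filter_eq_apply_of_bijective {α β γ : Type*} [Fintype α] [Fintype β]
    [DecidableEq γ] {f : α → γ} (hf : Bijective f) (g : β → γ) :
    (Finset.univ.filter fun p : α × β => g p.2 = f p.1).card = Fintype.card β := by
  set e := Equiv.ofBijective f hf
  rw [← Finset.card_univ]
  refine Finset.card_nbij' Prod.snd (fun y => (e.symm (g y), y)) (by simp)
    (by simp [e, Equiv.ofBijective_apply_symm_apply]) ?_ fun _ _ => rfl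
  rintro ⟨x, y⟩ hxy
  have hx : e.symm (g y) = x := e.symm_apply_eq.2 (Finset.mem_filter.1 hxy).2
  simp [hx]

namespace FiniteField

variable {F : Type*} [Field F] [Fintype F]

theorem natCast_ne_zero_of_coprime {n : ℕ} (hn : (Fintype.card F).Coprime n) : (n : F) ≠ 0 :=
  fun h => CharP.ringChar_ne_one <|
    Nat.eq_one_of_dvd_coprimes hn (ringChar.dvd (cast_card_eq_zero F)) (ringChar.dvd h)

theorem pow_injective_of_coprime {n : ℕ} (hn0 : n ≠ 0) (hn : (Fintype.card F - 1).Coprime n) :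
    Injective fun x : F => x ^ n := by
  intro a b hab
  simp only at hab
  rcases eq_or_ne a 0 with rfl | ha
  · exact ((pow_eq_zero_iff hn0).1 (hab.symm.trans (zero_pow hn0))).symm
  rcases eq_or_ne b 0 with rfl | hb
  · exact absurd ((pow_eq_zero_iff hn0).1 (hab.trans (zero_pow hn0))) ha
  have hunits : (Nat.card Fˣ).Coprime n := by
    rwa [Nat.card_units, Nat.card_eq_fintype_card]
  have := hunits.pow_left_bijective.injective
    (a₁ := Units.mk0 a ha) (a₂ := Units.mk0 b hb) (Units.ext (by simpa using hab))
  simpa using congrArg Units.val this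

end FiniteField

theorem sub_one_mul_sq_add_inv_three {F : Type*} [Field F] (h3 : (3 : F) ≠ 0) (x : F) :
    (x - 1) * (x ^ 2 + (3 : F)⁻¹) = (x - (3 : F)⁻¹) ^ 3 - (2 * (3 : F)⁻¹) ^ 3 := by
  field_simp
  ring

theorem stmt10_general (F : Type*) [Field F] [Fintype F] [DecidableEq F]
    (l : ℕ) (hq3 : Fintype.card F % 3 = 2) :
    (Finset.univ.filter
        (fun p : F × F => p.2 ^ l = (p.1 - 1) * (p.1 ^ 2 + (3 : F)⁻¹))).card =
      Fintype.card F := by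
  have coprime_three {m : ℕ} (hm : m % 3 ≠ 0) : m.Coprime 3 :=
    (Nat.Prime.coprime_iff_not_dvd Nat.prime_three).2 (by omega) |>.symm
  have h3 : (3 : F) ≠ 0 := by
    exact_mod_cast FiniteField.natCast_ne_zero_of_coprime (F := F) (coprime_three (by omega))
  have hcube : Bijective fun x : F => x ^ 3 :=
    Finite.injective_iff_bijective.1 <|
      FiniteField.pow_injective_of_coprime three_ne_zero (coprime_three (by omega))
  have hcubic : Bijective fun x : F => (x - 1) * (x ^ 2 + (3 : F)⁻¹) := by
    simp only [sub_one_mul_sq_add_inv_three h3]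
    exact (Equiv.subRight _).bijective.comp (hcube.comp (Equiv.subRight _).bijective)
  exact Finset.card_filter_eq_apply_of_bijective hcubic _

/-- If `q ≡ 2 (mod 3)`, `l ≥ 2`, `l ≠ 3`, `q ≡ 1 (mod l)`, then the number of affine
points on `y^l = (x-1)(x²+1/3)` over `F_q` is exactly `q`. -/
theorem stmt10 (F : Type*) [Field F] [Fintype F] [DecidableEq F]
    (hodd : Odd (Fintype.card F))
    (l : ℕ) (hl : 2 ≤ l) (hl3 : l ≠ 3)
    (hq3 : Fintype.card F % 3 = 2) (hql : Fintype.card F % l = 1) :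
    (Finset.univ.filter
        (fun p : F × F => p.2 ^ l = (p.1 - 1) * (p.1 ^ 2 + (3 : F)⁻¹))).card =
      Fintype.card F :=
  stmt10_general F l hq3
end

section
/- Let p be a prime with p ≡ 1 (mod 3) and write p = x² + 3y² with integers x, y, x ≡ 1 (mod 3) normalized so that the trace formula for y² = X³ + 1 holds. Then the trace of Frobenius a_p of the elliptic curve y² = x³ + 8 over F_p satisfies a_p = φ(2)·(-1)^{x+y-1}·(x/3)·2x, where φ is the quadratic character mod p and (x/3) is the Legendre symbol of x modulo 3. -/
open Finset

lemma count_aux (p : ℕ) [Fact p.Prime] (hp2 : p ≠ 2) (c : ZMod p) :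
    ((Finset.univ.filter
        (fun P : ZMod p × ZMod p => P.2 ^ 2 = P.1 ^ 3 + c)).card : ℤ) =
      (p : ℤ) + ∑ x : ZMod p, quadraticChar (ZMod p) (x ^ 3 + c) := by
  have hchar : ringChar (ZMod p) ≠ 2 := (ZMod.ringChar_zmod_n p).substr hp2
  have h1 : (Finset.univ.filter
      (fun P : ZMod p × ZMod p => P.2 ^ 2 = P.1 ^ 3 + c)).card =
      ∑ x : ZMod p, (Finset.univ.filter (fun y : ZMod p => y ^ 2 = x ^ 3 + c)).card := by
    rw [Finset.card_filter]
    rw [Fintype.sum_prod_type]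
    exact Finset.sum_congr rfl fun x _ => (Finset.card_filter _ _).symm
  rw [h1]
  push_cast
  have h2 : ∀ x : ZMod p,
      ((Finset.univ.filter (fun y : ZMod p => y ^ 2 = x ^ 3 + c)).card : ℤ) =
      quadraticChar (ZMod p) (x ^ 3 + c) + 1 := by
    intro x
    have := quadraticChar_card_sqrts hchar (x ^ 3 + c)
    rw [← this]
    congr 1
    rw [Set.toFinset_setOf]
  rw [Finset.sum_congr rfl (fun x _ => h2 x), Finset.sum_add_distrib]
  simp [ZMod.card p]
  ring

/-- If `p ≡ 1 (mod 3)`, `p = x² + 3y²` normalized so that the trace formula for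
`y² = X³ + 1` holds, then the trace of Frobenius of `y² = x³ + 8` over `F_p` is
`φ(2)·(-1)^{x+y-1}·(x/3)·2x`. Here the trace of Frobenius of an affine curve
`y² = f(x)` is `p - N` where `N` is the number of affine points (the projective
model has a single point at infinity). -/
theorem stmt11 (p : ℕ) [Fact p.Prime] (hp : p % 3 = 1) (x y : ℤ)
    (hxy : (p : ℤ) = x ^ 2 + 3 * y ^ 2)
    (hnorm : (p : ℤ) - (Finset.univ.filter
        (fun P : ZMod p × ZMod p => P.2 ^ 2 = P.1 ^ 3 + 1)).card =
      (((-1 : ℤˣ) ^ (x + y - 1) : ℤˣ) : ℤ) * legendreSym 3 x * (2 * x)) :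
    (p : ℤ) - (Finset.univ.filter
        (fun P : ZMod p × ZMod p => P.2 ^ 2 = P.1 ^ 3 + 8)).card =
      legendreSym p 2 * ((((-1 : ℤˣ) ^ (x + y - 1) : ℤˣ) : ℤ) * legendreSym 3 x * (2 * x)) := by
  have hp2 : p ≠ 2 := by rintro rfl; norm_num at hp
  have h2ne : (2 : ZMod p) ≠ 0 := by
    have : ((2 : ℕ) : ZMod p) ≠ 0 := by
      rw [Ne, ZMod.natCast_eq_zero_iff]
      exact fun h => hp2 ((Nat.prime_dvd_prime_iff_eq (Fact.out) Nat.prime_two).mp h)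
    simpa using this
  set χ := quadraticChar (ZMod p)
  -- quadratic char of 2 squared is 1
  have hχ2sq : χ 2 * χ 2 = 1 := by
    have := quadraticChar_sq_one h2ne
    rwa [sq] at this
  -- reindex the sum
  have hsum : ∑ u : ZMod p, χ (u ^ 3 + 8) = χ 2 * ∑ u : ZMod p, χ (u ^ 3 + 1) := by
    rw [Finset.mul_sum]
    rw [← Equiv.sum_comp (Equiv.mulLeft₀ (2 : ZMod p) h2ne) (fun u => χ (u ^ 3 + 8))]
    apply Finset.sum_congr rfl
    intro u _
    have : (Equiv.mulLeft₀ (2 : ZMod p) h2ne) u ^ 3 + 8 = 2 * 2 * (2 * (u ^ 3 + 1)) := by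
      simp only [Equiv.mulLeft₀_apply]
      ring
    rw [this, map_mul, map_mul, map_mul, hχ2sq, one_mul]
  have hc1 := count_aux p hp2 1
  have hc8 := count_aux p hp2 8
  have hleg : legendreSym p 2 = χ 2 := by
    rw [legendreSym]
    congr 1
    norm_num
  rw [hleg]
  have key : (p : ℤ) - (Finset.univ.filter
      (fun P : ZMod p × ZMod p => P.2 ^ 2 = P.1 ^ 3 + 8)).card =
      χ 2 * ((p : ℤ) - (Finset.univ.filter
      (fun P : ZMod p × ZMod p => P.2 ^ 2 = P.1 ^ 3 + 1)).card) := by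
    rw [hc1, hc8, hsum]
    ring
  rw [key, hnorm]
end

section
/- Let q be a power of an odd prime and A a multiplicative character of F_q. Then for all x in F_q: A(1+x) = δ(x) + (q/(q-1))·Σ_χ C(A,χ)·χ(x), where the sum is over all multiplicative characters χ of F_q, δ(0)=1 and δ(x)=0 for x≠0, and C(A,χ) is Greene's binomial coefficient. -/
noncomputable instance MulChar.fintype {M R : Type*} [CommMonoid M] [Finite Mˣ] [CommRing R]
    [IsDomain R] : Fintype (MulChar M R) :=
  .ofFinite _

theorem MulChar.sum_apply_eq_ite {M R : Type*} [CommMonoid M] [Finite M] [DecidableEq M]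
    [CommRing R] [IsDomain R] [HasEnoughRootsOfUnity R (Monoid.exponent Mˣ)] (a : M) :
    ∑ χ : MulChar M R, χ a = if a = 1 then (Nat.card Mˣ : R) else 0 := by
  split_ifs with ha
  · simp only [ha, map_one, Finset.sum_const, Finset.card_univ, nsmul_eq_mul, mul_one,
      ← Nat.card_eq_fintype_card, card_eq_card_units_of_hasEnoughRootsOfUnity]
  · obtain ⟨χ, hχ⟩ := exists_apply_ne_one_of_hasEnoughRootsOfUnity M R ha
    refine eq_zero_of_mul_eq_self_left hχ ?_
    simp only [Finset.mul_sum, ← MulChar.mul_apply]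
    exact Fintype.sum_bijective _ (Group.mulLeft_bijective χ) _ _ fun _ ↦ rfl

theorem neg_inv_one_sub_mul_eq_one_iff {K : Type*} [Field K] {x : K} (hx : x ≠ 0) (y : K) :
    -(1 - y)⁻¹ * x = 1 ↔ y = 1 + x := by
  by_cases hy : 1 - y = 0
  · have : y = 1 := by linear_combination -hy
    simp [this, hx]
  · rw [neg_mul, neg_eq_iff_eq_neg, inv_mul_eq_iff_eq_mul₀ hy]
    constructor <;> intro h <;> linear_combination -h

section FiniteField

variable {F : Type*} [Field F] [Fintype F]

theorem greeneBinom_mul_apply (A χ : MulChar F ℂ) (x : F) :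
    greeneBinom A χ * χ x = (Fintype.card F : ℂ)⁻¹ * ∑ y : F, A y * χ (-(1 - y)⁻¹ * x) := by
  simp only [greeneBinom, jacSum, Finset.mul_sum, Finset.sum_mul, div_eq_mul_inv]
  refine Finset.sum_congr rfl fun y _ ↦ ?_
  rw [MulChar.inv_apply' χ (1 - y), show -(1 - y)⁻¹ * x = -1 * ((1 - y)⁻¹ * x) by ring,
    map_mul, map_mul]
  ring

theorem sum_greeneBinom_mul_apply [DecidableEq F] (A : MulChar F ℂ) {x : F} (hx : x ≠ 0) :
    ∑ χ : MulChar F ℂ, greeneBinom A χ * χ x =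
      ((Fintype.card F : ℂ) - 1) / Fintype.card F * A (1 + x) := by
  have hunits : (Nat.card Fˣ : ℂ) = Fintype.card F - 1 := by
    rw [Nat.card_eq_fintype_card, Fintype.card_units, Nat.cast_sub Fintype.card_pos,
      Nat.cast_one]
  calc ∑ χ : MulChar F ℂ, greeneBinom A χ * χ x
      = (Fintype.card F : ℂ)⁻¹ * ∑ y : F, A y * ∑ χ : MulChar F ℂ, χ (-(1 - y)⁻¹ * x) := by
        simp only [greeneBinom_mul_apply, ← Finset.mul_sum]
        rw [Finset.sum_comm]
        simp only [Finset.mul_sum]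
    _ = (Fintype.card F : ℂ)⁻¹ *
          ∑ y : F, if y = 1 + x then A y * (Fintype.card F - 1) else 0 := by
        simp only [MulChar.sum_apply_eq_ite, neg_inv_one_sub_mul_eq_one_iff hx, hunits,
          mul_ite, mul_zero]
    _ = ((Fintype.card F : ℂ) - 1) / Fintype.card F * A (1 + x) := by
        rw [Finset.sum_ite_eq' Finset.univ (1 + x), if_pos (Finset.mem_univ _)]
        ring

end FiniteField

theorem stmt13_general (F : Type*) [Field F] [Fintype F] [DecidableEq F]
    (A : MulChar F ℂ) (x : F) :
    A (1 + x) =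
      (if x = 0 then 1 else 0) +
        (Fintype.card F : ℂ) / ((Fintype.card F : ℂ) - 1) *
          ∑ᶠ χ : MulChar F ℂ, greeneBinom A χ * χ x := by
  rw [finsum_eq_sum_of_fintype]
  by_cases hx : x = 0
  · simp [hx, MulChar.map_zero]
  · have hq : (Fintype.card F : ℂ) ≠ 0 := Nat.cast_ne_zero.mpr Fintype.card_ne_zero
    have hq1 : (Fintype.card F : ℂ) - 1 ≠ 0 := by
      rw [sub_ne_zero]
      exact_mod_cast Fintype.one_lt_card.ne'
    rw [sum_greeneBinom_mul_apply A hx, if_neg hx]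
    field_simp
    ring

/-- Greene's finite-field binomial theorem:
`A(1+x) = δ(x) + (q/(q-1))·Σ_χ C(A,χ)·χ(x)`. -/
theorem stmt13 (F : Type*) [Field F] [Fintype F] [DecidableEq F]
    (hodd : Odd (Fintype.card F)) (A : MulChar F ℂ) (x : F) :
    A (1 + x) =
      (if x = 0 then 1 else 0) +
        (Fintype.card F : ℂ) / ((Fintype.card F : ℂ) - 1) *
          ∑ᶠ χ : MulChar F ℂ, greeneBinom A χ * χ x :=
  stmt13_general F A x
end

section
/- Let q be a power of an odd prime, λ ∈ F_q with λ(λ+1) ≠ 0, and l = 2. Let φ be the quadratic character of F_q and a_q := -Σ_{t∈F_q} φ((t-1)(t²+λ)). Then a_q² = (Σ_{t∈F_q} φ((t-1)(t²+λ)))² = φ(λ²)·g(φ,φ;-1/λ)², where g(A,B;x) = Σ_{t∈F_q} A(1-t)B(1-xt²). -/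
/-!
Pull the constants out of both arguments of `g(φ,φ;-1/λ)`: `1 - t = -(t - 1)` and
`1 + t²/λ = λ⁻¹(t² + λ)`, so `g(φ,φ;-1/λ) = φ(-1)φ(λ⁻¹)·Σ_t φ((t-1)(t²+λ))`. After squaring, the
factor `φ(λ²)` cancels `φ(-1)²φ(λ⁻¹)²` by multiplicativity alone, so the identity holds for every
multiplicative character, not only the quadratic one.
-/

/-- Evans–Greene character sum `g(A,B;x) = Σ_t A(1-t)B(1-xt²)`. -/
noncomputable def gSum {F : Type*} [Field F] [Fintype F] (A B : MulChar F ℂ) (x : F) : ℂ :=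
  ∑ t : F, A (1 - t) * B (1 - x * t ^ 2)

section

variable {F : Type*} [Field F] [Fintype F]

theorem gSum_neg_inv (A B : MulChar F ℂ) {c : F} (hc : c ≠ 0) :
    gSum A B (-c⁻¹) = A (-1) * B c⁻¹ * ∑ t : F, A (t - 1) * B (t ^ 2 + c) := by
  rw [gSum, Finset.mul_sum]
  refine Finset.sum_congr rfl fun t _ => ?_
  have h₁ : 1 - t = -1 * (t - 1) := by ring
  have h₂ : 1 - -c⁻¹ * t ^ 2 = c⁻¹ * (t ^ 2 + c) := by field_simp; ring
  rw [h₁, h₂, map_mul, map_mul]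
  ring

theorem sq_sum_mulChar_eq_mul_sq_gSum (χ : MulChar F ℂ) {c : F} (hc : c ≠ 0) :
    (∑ t : F, χ ((t - 1) * (t ^ 2 + c))) ^ 2 = χ (c ^ 2) * gSum χ χ (-c⁻¹) ^ 2 := by
  have hunit : χ (c ^ 2) * (χ (-1) * χ c⁻¹) ^ 2 = 1 := by
    rw [← map_mul, ← map_pow, ← map_mul, mul_pow, neg_one_sq, one_mul, ← mul_pow,
      mul_inv_cancel₀ hc, one_pow, map_one]
  simp_rw [gSum_neg_inv χ χ hc, map_mul]
  linear_combination (-(∑ t : F, χ (t - 1) * χ (t ^ 2 + c)) ^ 2) * hunit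

end

theorem stmt15_general (F : Type*) [Field F] [Fintype F] [DecidableEq F]
    (lam : F) (hlam : lam * (lam + 1) ≠ 0) :
    let φ : MulChar F ℂ := (quadraticChar F).ringHomComp (Int.castRingHom ℂ);
    (-∑ t : F, φ ((t - 1) * (t ^ 2 + lam))) ^ 2 =
        (∑ t : F, φ ((t - 1) * (t ^ 2 + lam))) ^ 2 ∧
      (∑ t : F, φ ((t - 1) * (t ^ 2 + lam))) ^ 2 =
        φ (lam ^ 2) * (gSum φ φ (-lam⁻¹)) ^ 2 :=
  ⟨neg_sq _, sq_sum_mulChar_eq_mul_sq_gSum _ (left_ne_zero_of_mul hlam)⟩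

/-- For `l = 2`: `a_q² = (Σ_t φ((t-1)(t²+λ)))² = φ(λ²)·g(φ,φ;-1/λ)²`. -/
theorem stmt15 (F : Type*) [Field F] [Fintype F] [DecidableEq F]
    (hodd : Odd (Fintype.card F))
    (lam : F) (hlam : lam * (lam + 1) ≠ 0) :
    let φ : MulChar F ℂ := (quadraticChar F).ringHomComp (Int.castRingHom ℂ);
    (-∑ t : F, φ ((t - 1) * (t ^ 2 + lam))) ^ 2 =
        (∑ t : F, φ ((t - 1) * (t ^ 2 + lam))) ^ 2 ∧
      (∑ t : F, φ ((t - 1) * (t ^ 2 + lam))) ^ 2 =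
        φ (lam ^ 2) * (gSum φ φ (-lam⁻¹)) ^ 2 :=
  stmt15_general F lam hlam
end
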